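/- Let λ, μ be partitions with ℓ = ℓ(λ). Then for all u ∈ ℂ: N_{μ,λ}(u) = N_{μ,λ̄}(q^{-1}u) · ∏_{j=1}^{μ_{ℓ+1}} (1 − q^{j−1}u)/(1 − q^{−ℓ_μ(ℓ+1,j)+j−2}u) · ∏_{i=1}^{ℓ}(1 − q^{ℓ−i+a_μ(i,1)+1}u), interpreted as a polynomial identity after clearing denominators. -/

import Mathlib

open Finset

noncomputable section

/-- The `i`-th part (0-indexed) of a partition given as a list of parts. -/
def part (l : List ℕ) (i : ℕ) : ℕ := l.getD i 0

/-- The `j`-th column length (0-indexed), i.e. λ'_{j+1} = #{i : λ_i ≥ j+1}. -/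
def conjPart (l : List ℕ) (j : ℕ) : ℕ := (l.filter (fun p => j < p)).length

/-- A list of naturals represents a partition: weakly decreasing with positive parts. -/
def IsPartition (l : List ℕ) : Prop := l.Pairwise (· ≥ ·) ∧ ∀ p ∈ l, 0 < p

/-- The Nekrasov factor N_{λ,μ}(u) =
  ∏_{(i,j)∈λ}(1 - q^{-ℓ_λ(i,j)-a_μ(i,j)-1} u) · ∏_{(i,j)∈μ}(1 - q^{ℓ_μ(i,j)+a_λ(i,j)+1} u),
  with cells 0-indexed: arm a_μ(i,j) = μ_{i+1} - (j+1), leg ℓ_λ(i,j) = λ'_{j+1} - (i+1). -/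
def nek (q u : ℂ) (lam mu : List ℕ) : ℂ :=
  (∏ i ∈ Finset.range lam.length, ∏ j ∈ Finset.range (part lam i),
    (1 - q ^ (-((conjPart lam j : ℤ) - ((i : ℤ) + 1)) - ((part mu i : ℤ) - ((j : ℤ) + 1)) - 1) * u)) *
  (∏ i ∈ Finset.range mu.length, ∏ j ∈ Finset.range (part mu i),
    (1 - q ^ (((conjPart mu j : ℤ) - ((i : ℤ) + 1)) + ((part lam i : ℤ) - ((j : ℤ) + 1)) + 1) * u))

/-- λ̄ : all parts decreased by 1, zero parts dropped. -/
def bar (l : List ℕ) : List ℕ := (l.map (fun p => p - 1)).filter (fun p => 0 < p)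

/-- r_n(λ) = (λ_1+1, …, λ_n+1, λ_{n+2}, λ_{n+3}, …). -/
def rn (n : ℕ) (l : List ℕ) : List ℕ :=
  ((List.range n).map (fun i => part l i + 1)) ++ l.drop (n + 1)

/-- The conjugate (transposed) partition as a list. -/
def conjList (l : List ℕ) : List ℕ :=
  (List.range (part l 0)).map (fun j => conjPart l j)

end

/-!
Split `N_{μ,λ}(u)` into its product over the cells of `μ` and its product over the cells of `λ`.
In the latter, removing the first column of `λ` turns the cell `(i, j+1)` of `λ` into the cell
`(i, j)` of `λ̄` with the same leg and the arm in `μ` lowered by one, which the substitution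
`u ↦ q⁻¹u` absorbs; the first column itself gives `∏ᵢ (1 - q^{ℓ-i+a_μ(i,1)+1} u)`.
In the product over the cells of `μ` the rows `i ≤ ℓ` behave the same way, because there the arm
in `λ̄` is the arm in `λ` minus one. Below row `ℓ` both arms are `-j`, so read column by column the
factors for `λ` are those for `λ̄` shifted down by one row, and each column telescopes to the
boundary factors `(1 - q^{j-1}u) / (1 - q^{-ℓ_μ(ℓ+1,j)+j-2}u)`.
-/

theorem Finset.prod_Ico_add_one_mul {M : Type*} [CommMonoid M] (f : ℕ → M) {a b : ℕ} (h : a ≤ b) :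
    (∏ i ∈ Ico a b, f (i + 1)) * f a = (∏ i ∈ Ico a b, f i) * f b := by
  rw [prod_Ico_add' f a b 1, mul_comm, ← prod_eq_prod_Ico_succ_bot (by omega), prod_Ico_succ_top h]

@[simp] theorem part_cons_zero (a : ℕ) (t : List ℕ) : part (a :: t) 0 = a := rfl

@[simp] theorem part_cons_succ (a : ℕ) (t : List ℕ) (i : ℕ) :
    part (a :: t) (i + 1) = part t i := rfl

theorem part_eq_zero {l : List ℕ} {i : ℕ} (h : l.length ≤ i) : part l i = 0 :=
  List.getD_eq_default _ _ h

theorem conjPart_cons (a : ℕ) (t : List ℕ) (j : ℕ) :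
    conjPart (a :: t) j = (if j < a then 1 else 0) + conjPart t j := by
  by_cases h : j < a <;> simp [conjPart, h, add_comm]

theorem conjPart_le_length (l : List ℕ) (j : ℕ) : conjPart l j ≤ l.length :=
  List.length_filter_le _ _

theorem conjPart_zero {l : List ℕ} (hl : ∀ p ∈ l, 0 < p) : conjPart l 0 = l.length := by
  rw [conjPart, List.filter_eq_self.mpr (by simpa using hl)]

theorem lt_part_iff_lt_conjPart {l : List ℕ} (hl : l.Pairwise (· ≥ ·)) (i j : ℕ) :
    j < part l i ↔ i < conjPart l j := by
  induction l generalizing i with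
  | nil => simp [part, conjPart]
  | cons a t ih =>
    obtain ⟨ha, ht⟩ := List.pairwise_cons.mp hl
    have hzero : ¬ j < a → conjPart t j = 0 := fun hja => by
      simp only [conjPart, List.length_eq_zero_iff, List.filter_eq_nil_iff, decide_eq_true_eq]
      exact fun x hx => by have := ha x hx; omega
    rw [conjPart_cons]
    cases i with
    | zero => by_cases hja : j < a <;> simp [hja, hzero]
    | succ n =>
      have := ih ht n
      by_cases hja : j < a
      · simp only [part_cons_succ, hja, if_true]; omega
      · simp only [part_cons_succ, hja, if_false, hzero hja]; omega

theorem part_antitone {l : List ℕ} (hl : l.Pairwise (· ≥ ·)) : Antitone (part l) := by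
  intro i i' h
  by_contra! hc
  have := (lt_part_iff_lt_conjPart hl i' (part l i)).mp hc
  have := (lt_part_iff_lt_conjPart hl i (part l i)).mpr (by omega)
  omega

theorem part_pos {l : List ℕ} (hl : IsPartition l) {i : ℕ} (h : i < l.length) : 0 < part l i := by
  rwa [lt_part_iff_lt_conjPart hl.1, conjPart_zero hl.2]

theorem conjPart_bar (l : List ℕ) (j : ℕ) : conjPart (bar l) j = conjPart l (j + 1) := by
  simp only [conjPart, bar, List.filter_filter, List.filter_map, List.length_map]
  congr 1
  apply List.filter_congr
  intro p _
  simp only [Function.comp_apply, ← Bool.decide_and, decide_eq_decide]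
  omega

theorem length_bar_le (l : List ℕ) : (bar l).length ≤ l.length :=
  (List.length_filter_le _ _).trans (List.length_map _).le

theorem pairwise_bar {l : List ℕ} (hl : l.Pairwise (· ≥ ·)) : (bar l).Pairwise (· ≥ ·) :=
  (List.pairwise_map.mpr (hl.imp fun h => Nat.sub_le_sub_right h 1)).filter _

theorem part_bar {l : List ℕ} (hl : l.Pairwise (· ≥ ·)) (i : ℕ) : part (bar l) i = part l i - 1 :=
  eq_of_forall_lt_iff fun j => by
    rw [lt_part_iff_lt_conjPart (pairwise_bar hl), conjPart_bar, ← lt_part_iff_lt_conjPart hl]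
    omega

def cellProd {M : Type*} [CommMonoid M] (l : List ℕ) (f : ℕ → ℕ → M) : M :=
  ∏ i ∈ range l.length, ∏ j ∈ range (part l i), f i j

section cellProd

variable {M : Type*} [CommMonoid M] {l : List ℕ}

theorem cellProd_eq_prod_range (f : ℕ → ℕ → M) {N : ℕ} (hN : l.length ≤ N) :
    cellProd l f = ∏ i ∈ range N, ∏ j ∈ range (part l i), f i j := by
  refine prod_subset (range_subset_range.mpr hN) fun i _ hi => ?_
  rw [part_eq_zero (by simpa using hi), range_zero, prod_empty]

theorem cellProd_eq_prod_rows_mul_prod_cols (hl : l.Pairwise (· ≥ ·)) (f : ℕ → ℕ → M) (L : ℕ) :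
    cellProd l f = (∏ i ∈ range L, ∏ j ∈ range (part l i), f i j) *
      ∏ j ∈ range (part l L), ∏ i ∈ Ico L (conjPart l j), f i j := by
  rw [cellProd_eq_prod_range f (Nat.le_add_left l.length L),
    ← prod_range_mul_prod_Ico _ le_self_add]
  congr 1
  refine prod_comm' fun i j => ?_
  simp only [mem_Ico, mem_range, ← lt_part_iff_lt_conjPart hl]
  have hlen : j < part l i → i < l.length := fun h =>
    ((lt_part_iff_lt_conjPart hl i j).mp h).trans_le (conjPart_le_length l j)
  have hanti : L ≤ i → part l i ≤ part l L := fun h => part_antitone hl h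
  constructor <;> intro h <;> omega

theorem cellProd_eq_cellProd_bar_mul (hl : IsPartition l) (f : ℕ → ℕ → M) :
    cellProd l f = cellProd (bar l) (fun i j => f i (j + 1)) * ∏ i ∈ range l.length, f i 0 := by
  rw [cellProd_eq_prod_range _ (length_bar_le l), cellProd, ← prod_mul_distrib]
  refine prod_congr rfl fun i hi => ?_
  obtain ⟨n, hn⟩ := Nat.exists_eq_add_one_of_ne_zero (part_pos hl (mem_range.mp hi)).ne'
  rw [part_bar hl.1, hn, prod_range_succ', Nat.add_sub_cancel]

end cellProd

def leg (l : List ℕ) (i j : ℕ) : ℤ := conjPart l j - (i + 1)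

def arm (l : List ℕ) (i j : ℕ) : ℤ := part l i - (j + 1)

theorem nek_eq_cellProd_mul_cellProd (q u : ℂ) (lam mu : List ℕ) :
    nek q u lam mu = cellProd lam (fun i j => 1 - q ^ (-leg lam i j - arm mu i j - 1) * u) *
      cellProd mu (fun i j => 1 - q ^ (leg mu i j + arm lam i j + 1) * u) := rfl

theorem one_sub_zpow_mul_inv_mul {q : ℂ} (hq : q ≠ 0) (e : ℤ) (u : ℂ) :
    1 - q ^ e * (q⁻¹ * u) = 1 - q ^ (e - 1) * u := by
  rw [zpow_sub_one₀ hq]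
  ring

theorem cellProd_leg_add_arm_eq_bar_mul {q : ℂ} (hq : q ≠ 0) {lam : List ℕ} (hlam : IsPartition lam)
    (mu : List ℕ) (u : ℂ) :
    cellProd lam (fun i j => 1 - q ^ (leg lam i j + arm mu i j + 1) * u) =
      cellProd (bar lam) (fun i j => 1 - q ^ (leg (bar lam) i j + arm mu i j + 1) * (q⁻¹ * u)) *
        ∏ i ∈ range lam.length, (1 - q ^ ((lam.length : ℤ) - i - 1 + part mu i) * u) := by
  rw [cellProd_eq_cellProd_bar_mul hlam]
  congr 1
  · congr 1
    funext i j
    rw [one_sub_zpow_mul_inv_mul hq, leg, leg, arm, arm, conjPart_bar]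
    congr 3
    push_cast
    ring
  · refine prod_congr rfl fun i _ => ?_
    rw [leg, arm, conjPart_zero hlam.2]
    congr 3
    push_cast
    ring

theorem cellProd_neg_leg_sub_arm_mul_eq_bar_mul {q : ℂ} (hq : q ≠ 0) {lam mu : List ℕ}
    (hlam : IsPartition lam) (hmu : mu.Pairwise (· ≥ ·)) (u : ℂ) :
    cellProd mu (fun i j => 1 - q ^ (-leg mu i j - arm lam i j - 1) * u) *
        ∏ j ∈ range (part mu lam.length), (1 - q ^ (-(conjPart mu j : ℤ) + lam.length + j) * u) =
      cellProd mu (fun i j => 1 - q ^ (-leg mu i j - arm (bar lam) i j - 1) * (q⁻¹ * u)) *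
        ∏ j ∈ range (part mu lam.length), (1 - q ^ (j : ℤ) * u) := by
  set L := lam.length
  have hrows : ∀ i < L, ∀ j,
      -leg mu i j - arm lam i j - 1 = -leg mu i j - arm (bar lam) i j - 1 - 1 := by
    intro i hi j
    have := part_pos hlam hi
    simp only [arm, part_bar hlam.1]
    omega
  have htail : ∀ i, L ≤ i → ∀ j, -leg mu i j - arm lam i j - 1 = i + 1 + j - conjPart mu j ∧
      -leg mu i j - arm (bar lam) i j - 1 - 1 = i + j - conjPart mu j := by
    intro i hi j
    have := part_eq_zero hi
    simp only [leg, arm, part_bar hlam.1, this]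
    omega
  rw [cellProd_eq_prod_rows_mul_prod_cols hmu _ L, cellProd_eq_prod_rows_mul_prod_cols hmu _ L,
    mul_assoc, mul_assoc, ← prod_mul_distrib, ← prod_mul_distrib]
  congr 1
  · refine prod_congr rfl fun i hi => prod_congr rfl fun j _ => ?_
    rw [one_sub_zpow_mul_inv_mul hq, hrows i (mem_range.mp hi)]
  · refine prod_congr rfl fun j hj => ?_
    have hLK : L ≤ conjPart mu j := ((lt_part_iff_lt_conjPart hmu L j).mp (mem_range.mp hj)).le
    convert prod_Ico_add_one_mul (fun t : ℕ => 1 - q ^ ((t : ℤ) + j - conjPart mu j) * u) hLK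
      using 2
    · refine prod_congr rfl fun i hi => ?_
      rw [(htail i (mem_Ico.mp hi).1 j).1, Nat.cast_succ]
    · congr 3; ring
    · refine prod_congr rfl fun i hi => ?_
      rw [one_sub_zpow_mul_inv_mul hq, (htail i (mem_Ico.mp hi).1 j).2]
    · congr 3; ring

theorem stmt19 (q : ℂ) (hq : q ≠ 0)
    (lam mu : List ℕ) (hlam : IsPartition lam) (hmu : IsPartition mu) (u : ℂ) :
    let L := lam.length
    nek q u mu lam *
        (∏ j ∈ Finset.range (part mu L), (1 - q ^ (-(conjPart mu j : ℤ) + (L : ℤ) + (j : ℤ)) * u)) =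
      nek q (q⁻¹ * u) mu (bar lam) *
        (∏ j ∈ Finset.range (part mu L), (1 - q ^ (j : ℤ) * u)) *
        (∏ i ∈ Finset.range L, (1 - q ^ ((L : ℤ) - (i : ℤ) - 1 + (part mu i : ℤ)) * u)) := by
  intro L
  rw [nek_eq_cellProd_mul_cellProd, nek_eq_cellProd_mul_cellProd,
    cellProd_leg_add_arm_eq_bar_mul hq hlam, mul_right_comm,
    cellProd_neg_leg_sub_arm_mul_eq_bar_mul hq hlam hmu.1]
  ring
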